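/- Let A^(i)_II, A^(i)_IΓ, A^(i)_ΓI (i = 1,...,p) and A_ΓΓ, M_ΓΓ be real matrices with A^(i)_II and M_ΓΓ invertible, and let S^(i)_ΓΓ := A^(i)_ΓΓ - A^(i)_ΓI (A^(i)_II)^{-1} A^(i)_IΓ where A_ΓΓ = Σ_i A^(i)_ΓΓ. Suppose Σ_{i=1}^p |I^(i)_ΓΓ - M_ΓΓ^{-1} A^(i)_ΓΓ| = |I_ΓΓ - M_ΓΓ^{-1} A_ΓΓ| where Σ_i I^(i)_ΓΓ = I_ΓΓ. If ρ(|I - M^{-1}A|) < 1 for the block-arrow matrix A and block-diagonal M built from these blocks, then ρ(Σ_{i=1}^p |I^(i)_ΓΓ - M_ΓΓ^{-1} S^(i)_ΓΓ|) < 1. -/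

import Mathlib

/-!
For a nonnegative matrix `C`, `ρ(C) < 1` iff some positive vector `w` satisfies `C w < w`
entrywise. If `ρ(C) < 1`, Gelfand's formula gives a power `C ^ N` with all row sums `< 1`, and
the truncated Neumann series `w = ∑_{k<N} C^k 𝟙` works; conversely, comparing an eigenvector
with `w` bounds every eigenvalue (Collatz–Wielandt).

For the block-arrow matrix, `|I - M⁻¹A|` has the block form
`[[0, |A_II⁻¹ A_IΓ|], [|M_ΓΓ⁻¹ A_ΓI|, |I - M_ΓΓ⁻¹ A_ΓΓ|]]`. Splitting a positive test vector
`(u, v)` for it, `v` is a test vector for every nonnegative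
`T ≤ |I - M_ΓΓ⁻¹ A_ΓΓ| + |M_ΓΓ⁻¹ A_ΓI| |A_II⁻¹ A_IΓ|`. Writing
`I⁽ⁱ⁾ - M_ΓΓ⁻¹ S⁽ⁱ⁾ = (I⁽ⁱ⁾ - M_ΓΓ⁻¹ A⁽ⁱ⁾_ΓΓ) + (M_ΓΓ⁻¹ A⁽ⁱ⁾_ΓI)((A⁽ⁱ⁾_II)⁻¹ A⁽ⁱ⁾_IΓ)`, the triangle
inequality and the hypothesis on `∑ᵢ |I⁽ⁱ⁾ - M_ΓΓ⁻¹ A⁽ⁱ⁾_ΓΓ|` show that `∑ᵢ |I⁽ⁱ⁾ - M_ΓΓ⁻¹ S⁽ⁱ⁾|`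
is such a `T`.
-/

open Matrix Finset

/-- Spectral radius of a real square matrix: the supremum of the absolute values of its
complex eigenvalues (roots of the characteristic polynomial). -/
noncomputable def specRad {n : Type*} [Fintype n] [DecidableEq n] (A : Matrix n n ℝ) : ℝ :=
  sSup {r : ℝ | ∃ μ : ℂ, ((A.map Complex.ofReal).charpoly).IsRoot μ ∧ r = ‖μ‖}

open scoped NNReal ENNReal

section SpectralRadius

variable {n : Type*} [Fintype n] [DecidableEq n]

lemma specRad_eq_sSup_norm_spectrum (C : Matrix n n ℝ) :
    specRad C = sSup ((‖·‖) '' spectrum ℂ (C.map Complex.ofReal)) := by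
  simp only [specRad, mem_spectrum_iff_isRoot_charpoly, Set.image, eq_comm]

lemma norm_le_specRad {C : Matrix n n ℝ} {μ : ℂ} (hμ : μ ∈ spectrum ℂ (C.map Complex.ofReal)) :
    ‖μ‖ ≤ specRad C := by
  rw [specRad_eq_sSup_norm_spectrum]
  exact le_csSup ((finite_spectrum _).image _).bddAbove ⟨μ, hμ, rfl⟩

lemma spectralRadius_map_ofReal_lt_one {C : Matrix n n ℝ} (h : specRad C < 1) :
    spectralRadius ℂ (C.map Complex.ofReal) < 1 := by
  refine lt_of_le_of_lt (iSup₂_le fun μ hμ => ?_) (ENNReal.ofReal_lt_one.2 h)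
  rw [← enorm_eq_nnnorm, ← ofReal_norm]
  exact ENNReal.ofReal_le_ofReal (norm_le_specRad hμ)

lemma exists_mulVec_eq_smul_of_mem_spectrum {K : Type*} [Field K] {A : Matrix n n K} {μ : K}
    (hμ : μ ∈ spectrum K A) : ∃ x ≠ 0, A *ᵥ x = μ • x := by
  rw [spectrum.mem_iff, isUnit_iff_isUnit_det, isUnit_iff_ne_zero, not_not,
    ← exists_mulVec_eq_zero_iff] at hμ
  obtain ⟨x, hx0, hx⟩ := hμ
  refine ⟨x, hx0, ?_⟩
  rwa [sub_mulVec, Algebra.algebraMap_eq_smul_one, smul_mulVec, one_mulVec, sub_eq_zero,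
    eq_comm] at hx

lemma exists_norm_pow_lt_one_of_spectralRadius_lt_one {A : Type*} [NormedRing A]
    [NormedAlgebra ℂ A] [CompleteSpace A] {a : A} (h : spectralRadius ℂ a < 1) :
    ∃ N, 0 < N ∧ ‖a ^ N‖ < 1 := by
  obtain ⟨N, hlt, hN⟩ :=
    (((spectrum.pow_nnnorm_pow_one_div_tendsto_nhds_spectralRadius a).eventually_lt_const h).and
      (Filter.eventually_gt_atTop 0)).exists
  refine ⟨N, hN, ?_⟩
  by_contra! hge
  have : (1 : ℝ≥0∞) ≤ (‖a ^ N‖₊ : ℝ≥0∞) ^ (1 / (N : ℝ)) :=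
    ENNReal.one_le_rpow (by exact_mod_cast hge) (by positivity)
  exact hlt.not_ge this

attribute [local instance] Matrix.linftyOpNormedRing Matrix.linftyOpNormedAlgebra in
lemma exists_pow_row_sum_lt_one_of_specRad_lt_one {C : Matrix n n ℝ} (hC : ∀ i j, 0 ≤ C i j)
    (h : specRad C < 1) :
    ∃ N, 0 < N ∧ ∀ i, ∑ j, (C ^ N) i j < 1 := by
  have : CompleteSpace (Matrix n n ℂ) := FiniteDimensional.complete ℂ _
  obtain ⟨N, hN, hnorm⟩ := exists_norm_pow_lt_one_of_spectralRadius_lt_one (A := Matrix n n ℂ)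
    (spectralRadius_map_ofReal_lt_one h)
  have hmap : (C.map Complex.ofReal) ^ N = (C ^ N).map Complex.ofReal :=
    (Matrix.map_pow C Complex.ofRealHom N).symm
  rw [hmap] at hnorm
  refine ⟨N, hN, fun i => lt_of_le_of_lt ?_ hnorm⟩
  have hrow := le_sup (f := fun i => ∑ j, ‖((C ^ N).map Complex.ofReal) i j‖₊) (mem_univ i)
  rw [linfty_opNorm_def]
  refine le_of_eq_of_le ?_ (NNReal.coe_le_coe.2 hrow)
  push_cast
  refine sum_congr rfl fun j _ => ?_
  simp [abs_of_nonneg (pow_apply_nonneg hC N i j)]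

lemma exists_pos_mulVec_lt_of_pow_row_sum_lt_one {C : Matrix n n ℝ} (hC : ∀ i j, 0 ≤ C i j)
    {N : ℕ} (hN : 0 < N) (h : ∀ i, ∑ j, (C ^ N) i j < 1) :
    ∃ w : n → ℝ, (∀ i, 0 < w i) ∧ ∀ i, (C *ᵥ w) i < w i := by
  have hterm : ∀ k i, 0 ≤ (C ^ k *ᵥ 1) i := fun k i =>
    sum_nonneg fun j _ => mul_nonneg (pow_apply_nonneg hC k i j) zero_le_one
  have hrow : ∀ i, (C ^ N *ᵥ 1) i < 1 := fun i => by simpa [mulVec, dotProduct] using h i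
  set w := ∑ k ∈ range N, C ^ k *ᵥ 1 with hw
  have htel : C *ᵥ w + 1 = w + C ^ N *ᵥ 1 := by
    rw [hw, mulVec_sum]
    simp_rw [mulVec_mulVec, ← pow_succ']
    rw [← sum_range_succ (fun k => C ^ k *ᵥ 1), sum_range_succ', pow_zero, one_mulVec]
  refine ⟨w, fun i => ?_, fun i => ?_⟩
  · calc (0 : ℝ) < (C ^ 0 *ᵥ 1) i := by simp
      _ ≤ w i := by
        rw [hw, Finset.sum_apply]
        exact single_le_sum (fun k _ => hterm k i) (mem_range.2 hN)
  · have := congrFun htel i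
    simp only [Pi.add_apply, Pi.one_apply] at this
    linarith [hrow i]

lemma norm_le_of_mem_spectrum_of_mulVec_le {T : Matrix n n ℝ} (hT : ∀ i j, 0 ≤ T i j)
    {v : n → ℝ} (hv : ∀ i, 0 < v i) {r : ℝ} (h : ∀ i, (T *ᵥ v) i ≤ r * v i) {μ : ℂ}
    (hμ : μ ∈ spectrum ℂ (T.map Complex.ofReal)) : ‖μ‖ ≤ r := by
  obtain ⟨x, hx0, hx⟩ := exists_mulVec_eq_smul_of_mem_spectrum hμ
  obtain ⟨j₀, hj₀⟩ := Function.ne_iff.1 hx0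
  have : Nonempty n := ⟨j₀⟩
  -- compare `x` with `v` at a coordinate where `‖x k‖ / v k` is maximal
  obtain ⟨k, hk⟩ := Finite.exists_max fun j => ‖x j‖ / v j
  set c := ‖x k‖ / v k
  have hxc : ∀ j, ‖x j‖ ≤ c * v j := fun j => (div_le_iff₀ (hv j)).1 (hk j)
  have hxk : 0 < ‖x k‖ := (div_pos_iff_of_pos_right (hv k)).1
    ((div_pos (norm_pos_iff.2 hj₀) (hv j₀)).trans_le (hk j₀))
  have hc : c * v k = ‖x k‖ := div_mul_cancel₀ _ (hv k).ne'
  refine le_of_mul_le_mul_right ?_ hxk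
  calc ‖μ‖ * ‖x k‖ = ‖∑ j, (T k j : ℂ) * x j‖ := by
        rw [← norm_mul, ← smul_eq_mul, ← Pi.smul_apply, ← hx]; rfl
    _ ≤ ∑ j, T k j * ‖x j‖ := by
        refine (norm_sum_le _ _).trans_eq (sum_congr rfl fun j _ => ?_)
        rw [norm_mul, Complex.norm_real, Real.norm_of_nonneg (hT k j)]
    _ ≤ ∑ j, T k j * (c * v j) :=
        sum_le_sum fun j _ => mul_le_mul_of_nonneg_left (hxc j) (hT k j)
    _ = c * (T *ᵥ v) k := by
        simp only [mulVec, dotProduct, mul_sum]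
        exact sum_congr rfl fun j _ => by ring
    _ ≤ c * (r * v k) := mul_le_mul_of_nonneg_left (h k) (div_nonneg hxk.le (hv k).le)
    _ = r * ‖x k‖ := by rw [← hc]; ring

lemma specRad_le_of_mulVec_le {T : Matrix n n ℝ} (hT : ∀ i j, 0 ≤ T i j) {v : n → ℝ}
    (hv : ∀ i, 0 < v i) {r : ℝ} (hr : 0 ≤ r) (h : ∀ i, (T *ᵥ v) i ≤ r * v i) :
    specRad T ≤ r := by
  rw [specRad_eq_sSup_norm_spectrum]
  exact Real.sSup_le (Set.forall_mem_image.2 fun μ hμ =>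
    norm_le_of_mem_spectrum_of_mulVec_le hT hv h hμ) hr

lemma specRad_lt_one_of_mulVec_lt {T : Matrix n n ℝ} (hT : ∀ i j, 0 ≤ T i j) {v : n → ℝ}
    (hv : ∀ i, 0 < v i) (h : ∀ i, (T *ᵥ v) i < v i) : specRad T < 1 := by
  obtain ⟨r, hr0, hr1, hr⟩ : ∃ r, 0 ≤ r ∧ r < 1 ∧ ∀ i, (T *ᵥ v) i ≤ r * v i := by
    cases isEmpty_or_nonempty n with
    | inl _ => exact ⟨0, le_rfl, one_pos, isEmptyElim⟩
    | inr _ =>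
      obtain ⟨k, hk⟩ := Finite.exists_max fun i => (T *ᵥ v) i / v i
      have hTv : 0 ≤ (T *ᵥ v) k := sum_nonneg fun j _ => mul_nonneg (hT k j) (hv j).le
      exact ⟨_, div_nonneg hTv (hv k).le, (div_lt_one (hv k)).2 (h k),
        fun i => (div_le_iff₀ (hv i)).1 (hk i)⟩
  exact (specRad_le_of_mulVec_le hT hv hr0 hr).trans_lt hr1

theorem specRad_lt_one_iff_exists_pos_mulVec_lt {C : Matrix n n ℝ} (hC : ∀ i j, 0 ≤ C i j) :
    specRad C < 1 ↔ ∃ w : n → ℝ, (∀ i, 0 < w i) ∧ ∀ i, (C *ᵥ w) i < w i := by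
  refine ⟨fun h => ?_, fun ⟨w, hw, h⟩ => specRad_lt_one_of_mulVec_lt hC hw h⟩
  obtain ⟨N, hN, hrow⟩ := exists_pow_row_sum_lt_one_of_specRad_lt_one hC h
  exact exists_pos_mulVec_lt_of_pow_row_sum_lt_one hC hN hrow

end SpectralRadius

lemma blockDiagonal'_apply_mk {ι α : Type*} [DecidableEq ι] {κ : ι → Type*} [Zero α]
    (B : ∀ i, Matrix (κ i) (κ i) α) (i : ι) (a : κ i) (j : ι) (b : κ j) :
    blockDiagonal' B ⟨i, a⟩ ⟨j, b⟩ = if h : i = j then B i a (h ▸ b) else 0 := by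
  by_cases h : i = j
  · subst h; simp
  · simp [h, blockDiagonal'_apply_ne]

section BlockDiagonal

variable {ι : Type*} [Fintype ι] [DecidableEq ι] {κ : ι → Type*} [∀ i, Fintype (κ i)]

lemma blockDiagonal'_inv_mul [∀ i, DecidableEq (κ i)] {K : Type*} [CommRing K]
    {B : ∀ i, Matrix (κ i) (κ i) K} (hB : ∀ i, IsUnit (B i).det) :
    (blockDiagonal' fun i => (B i)⁻¹) * blockDiagonal' B = 1 := by
  rw [← blockDiagonal'_mul]
  simp_rw [nonsing_inv_mul _ (hB _)]
  exact blockDiagonal'_one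

lemma blockDiagonal'_mul_of_sigma {α : Type*} [NonUnitalNonAssocSemiring α] {p : Type*}
    (B : ∀ i, Matrix (κ i) (κ i) α) (E : ∀ i, Matrix (κ i) p α) :
    blockDiagonal' B * (of fun x t => E x.1 x.2 t : Matrix (Σ i, κ i) p α) =
      of fun x t => (B x.1 * E x.1) x.2 t := by
  refine Matrix.ext fun ⟨i, a⟩ t => ?_
  rw [mul_apply, Fintype.sum_sigma, Fintype.sum_eq_single i fun j hj => sum_eq_zero fun b _ => by
    rw [blockDiagonal'_apply_ne _ _ _ (Ne.symm hj), zero_mul]]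
  simp [mul_apply]

end BlockDiagonal

lemma one_sub_inv_fromBlocks_mul_fromBlocks {m n K : Type*} [Fintype m] [Fintype n]
    [DecidableEq m] [DecidableEq n] [CommRing K] {D : Matrix m m K} {P : Matrix n n K}
    (hD : IsUnit D.det) (hP : IsUnit P.det) (E : Matrix m n K) (F : Matrix n m K)
    (G : Matrix n n K) :
    1 - (fromBlocks D 0 0 P)⁻¹ * fromBlocks D E F G =
      fromBlocks 0 (-(D⁻¹ * E)) (-(P⁻¹ * F)) (1 - P⁻¹ * G) := by
  rw [inv_fromBlocks_zero₁₂_of_isUnit_iff _ _ _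
    (iff_of_true ((isUnit_iff_isUnit_det _).2 hD) ((isUnit_iff_isUnit_det _).2 hP)),
    fromBlocks_multiply, ← fromBlocks_one, sub_eq_add_neg, fromBlocks_neg, fromBlocks_add]
  simp [nonsing_inv_mul _ hD, sub_eq_add_neg]

lemma one_sub_inv_mul_blockArrow {ι n K : Type*} [Fintype ι] [DecidableEq ι] {κ : ι → Type*}
    [∀ i, Fintype (κ i)] [∀ i, DecidableEq (κ i)] [Fintype n] [DecidableEq n] [CommRing K]
    {B : ∀ i, Matrix (κ i) (κ i) K} (hB : ∀ i, IsUnit (B i).det) {P : Matrix n n K}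
    (hP : IsUnit P.det) (E : ∀ i, Matrix (κ i) n K) (F : ∀ i, Matrix n (κ i) K)
    (G : Matrix n n K) :
    1 - (fromBlocks (blockDiagonal' B) 0 0 P)⁻¹ *
        fromBlocks (blockDiagonal' B) (of fun x t => E x.1 x.2 t) (of fun l x => F x.1 l x.2) G =
      fromBlocks 0 (-of fun x t => ((B x.1)⁻¹ * E x.1) x.2 t)
        (-of fun l x => (P⁻¹ * F x.1) l x.2) (1 - P⁻¹ * G) := by
  have hBinv := blockDiagonal'_inv_mul hB
  rw [one_sub_inv_fromBlocks_mul_fromBlocks (isUnit_det_of_left_inverse hBinv) hP,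
    inv_eq_left_inv hBinv, blockDiagonal'_mul_of_sigma]
  rfl

lemma abs_mul_apply_le {l m n : Type*} [Fintype m] (P : Matrix l m ℝ) (Q : Matrix m n ℝ)
    (i : l) (j : n) : |(P * Q) i j| ≤ ∑ k, |P i k| * |Q k j| :=
  (abs_sum_le_sum_abs _ _).trans_eq (by simp_rw [abs_mul])

lemma abs_sub_mul_schur_apply_le {m n : Type*} [Fintype m] [Fintype n]
    (I G P : Matrix n n ℝ) (F : Matrix n m ℝ) (R : Matrix m m ℝ) (E : Matrix m n ℝ) (l t : n) :
    |(I - P * (G - F * R * E)) l t| ≤ |(I - P * G) l t| + ∑ b, |(P * F) l b| * |(R * E) b t| := by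
  have hsplit : I - P * (G - F * R * E) = (I - P * G) + (P * F) * (R * E) := by
    simp only [mul_sub, Matrix.mul_assoc]; abel
  rw [hsplit, Matrix.add_apply]
  exact (abs_add_le _ _).trans (add_le_add le_rfl (abs_mul_apply_le _ _ l t))

theorem specRad_lt_one_of_le_add_mul_of_specRad_fromBlocks_lt_one {m n : Type*} [Fintype m]
    [Fintype n] [DecidableEq m] [DecidableEq n]
    {X T : Matrix n n ℝ} {Y : Matrix n m ℝ} {Z : Matrix m n ℝ}
    (hX : ∀ i j, 0 ≤ X i j) (hY : ∀ i j, 0 ≤ Y i j) (hZ : ∀ i j, 0 ≤ Z i j)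
    (hT : ∀ i j, 0 ≤ T i j) (hTXYZ : ∀ i j, T i j ≤ X i j + (Y * Z) i j)
    (h : specRad (fromBlocks 0 Z Y X) < 1) : specRad T < 1 := by
  have hC : ∀ i j, 0 ≤ fromBlocks 0 Z Y X i j := by
    rintro (a | l) (b | t) <;> simp [hX, hY, hZ]
  obtain ⟨w, hw, hCw⟩ := (specRad_lt_one_iff_exists_pos_mulVec_lt hC).1 h
  set u := w ∘ Sum.inl
  set v := w ∘ Sum.inr
  have hZv : ∀ a, (Z *ᵥ v) a ≤ u a := fun a => by
    simpa [fromBlocks_mulVec, u, v] using (hCw (Sum.inl a)).le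
  have hYX : ∀ l, (Y *ᵥ u) l + (X *ᵥ v) l < v l := fun l => by
    simpa [fromBlocks_mulVec, u, v] using hCw (Sum.inr l)
  refine specRad_lt_one_of_mulVec_lt hT (v := v) (fun l => hw _) fun l => ?_
  calc (T *ᵥ v) l ≤ ((X + Y * Z) *ᵥ v) l :=
        sum_le_sum fun t _ => mul_le_mul_of_nonneg_right (hTXYZ l t) (hw _).le
    _ = (X *ᵥ v) l + (Y *ᵥ (Z *ᵥ v)) l := by rw [add_mulVec, ← mulVec_mulVec]; rfl
    _ ≤ (X *ᵥ v) l + (Y *ᵥ u) l := add_le_add le_rfl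
        (sum_le_sum fun a _ => mul_le_mul_of_nonneg_left (hZv a) (hY l a))
    _ < v l := by linarith [hYX l]

theorem async_schur_convergence_practical
    (p q : ℕ) (s : Fin p → ℕ)
    (AII : ∀ i : Fin p, Matrix (Fin (s i)) (Fin (s i)) ℝ)
    (AIG : ∀ i : Fin p, Matrix (Fin (s i)) (Fin q) ℝ)
    (AGI : ∀ i : Fin p, Matrix (Fin q) (Fin (s i)) ℝ)
    (AGGi : Fin p → Matrix (Fin q) (Fin q) ℝ)
    (IGGi : Fin p → Matrix (Fin q) (Fin q) ℝ)
    (MGG : Matrix (Fin q) (Fin q) ℝ)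
    (hAII : ∀ i, IsUnit (AII i).det) (hMGG : IsUnit MGG.det)
    (hass : ∀ l t : Fin q,
      ∑ i, |(IGGi i - MGG⁻¹ * AGGi i) l t| =
        |((1 : Matrix (Fin q) (Fin q) ℝ) - MGG⁻¹ * ∑ i, AGGi i) l t|)
    (A M : Matrix ((Σ i : Fin p, Fin (s i)) ⊕ Fin q) ((Σ i : Fin p, Fin (s i)) ⊕ Fin q) ℝ)
    (hA : ∀ x y, A x y =
      match x, y with
      | Sum.inl ⟨i, a⟩, Sum.inl ⟨j, b⟩ =>
          if h : i = j then AII i a (h ▸ b) else 0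
      | Sum.inl ⟨i, a⟩, Sum.inr b => AIG i a b
      | Sum.inr a, Sum.inl ⟨j, b⟩ => AGI j a b
      | Sum.inr a, Sum.inr b => (∑ i, AGGi i) a b)
    (hM : ∀ x y, M x y =
      match x, y with
      | Sum.inl ⟨i, a⟩, Sum.inl ⟨j, b⟩ =>
          if h : i = j then AII i a (h ▸ b) else 0
      | Sum.inl _, Sum.inr _ => 0
      | Sum.inr _, Sum.inl _ => 0
      | Sum.inr a, Sum.inr b => MGG a b)
    (hρ : specRad (Matrix.of fun x y =>
        |((1 : Matrix ((Σ i : Fin p, Fin (s i)) ⊕ Fin q)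
            ((Σ i : Fin p, Fin (s i)) ⊕ Fin q) ℝ) - M⁻¹ * A) x y|) < 1) :
    specRad (Matrix.of fun l t : Fin q =>
        ∑ i, |(IGGi i - MGG⁻¹ * (AGGi i - AGI i * (AII i)⁻¹ * AIG i)) l t|) < 1 := by
  set D := blockDiagonal' AII
  have hMblocks : M = fromBlocks D 0 0 MGG := by
    refine Matrix.ext ?_
    rintro (⟨i, a⟩ | l) (⟨j, b⟩ | t) <;> simp [hM, D, blockDiagonal'_apply_mk]
  have hAblocks : A = fromBlocks D (of fun x t => AIG x.1 x.2 t) (of fun l x => AGI x.1 l x.2)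
      (∑ i, AGGi i) := by
    refine Matrix.ext ?_
    rintro (⟨i, a⟩ | l) (⟨j, b⟩ | t) <;> simp [hA, D, blockDiagonal'_apply_mk]
  have hiter : (of fun x y => |(1 - M⁻¹ * A) x y| : Matrix (_ ⊕ Fin q) _ ℝ) =
      fromBlocks 0 (of fun x t => |((AII x.1)⁻¹ * AIG x.1) x.2 t|)
        (of fun l x => |(MGG⁻¹ * AGI x.1) l x.2|)
        (of fun l t => |((1 : Matrix (Fin q) (Fin q) ℝ) - MGG⁻¹ * ∑ i, AGGi i) l t|) := by
    rw [hMblocks, hAblocks, one_sub_inv_mul_blockArrow hAII hMGG]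
    refine Matrix.ext ?_
    rintro (x | l) (y | t) <;> simp [abs_neg]
  rw [hiter] at hρ
  refine specRad_lt_one_of_le_add_mul_of_specRad_fromBlocks_lt_one (fun _ _ => abs_nonneg _)
    (fun _ _ => abs_nonneg _) (fun _ _ => abs_nonneg _)
    (fun _ _ => by simp only [of_apply]; positivity) (fun l t => ?_) hρ
  calc ∑ i, |(IGGi i - MGG⁻¹ * (AGGi i - AGI i * (AII i)⁻¹ * AIG i)) l t|
      ≤ ∑ i, (|(IGGi i - MGG⁻¹ * AGGi i) l t|
          + ∑ b, |(MGG⁻¹ * AGI i) l b| * |((AII i)⁻¹ * AIG i) b t|) :=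
        sum_le_sum fun i _ => abs_sub_mul_schur_apply_le _ _ _ _ _ _ l t
    _ = |((1 : Matrix (Fin q) (Fin q) ℝ) - MGG⁻¹ * ∑ i, AGGi i) l t|
          + ∑ x : Σ i, Fin (s i), |(MGG⁻¹ * AGI x.1) l x.2| * |((AII x.1)⁻¹ * AIG x.1) x.2 t| := by
        rw [sum_add_distrib, hass, Fintype.sum_sigma]
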